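/- Let m, k, N be positive integers and let E = {v_1,…,v_N} ⊂ R^m be a set of nonzero vectors no two of which are collinear. Suppose 1/p_j ∈ [0,1], λ_j ∈ R, and there is a finite constant C such that Λ(f_1,…,f_N) ≤ C Π_{j=1}^N ‖f_j‖_{L^{p_j}_{λ_j}(R^k)} for all nonnegative measurable f_1,…,f_N on R^k. Then for every linear subspace V of R^m, Σ_{v_j∉V} λ_j ≥ 0. -/

import Mathlib

open MeasureTheory ENNReal
open scoped Classical

/-- The dot product `v · x ∈ ℝᵏ` for `v ∈ ℝᵐ` and `x ∈ (ℝᵏ)ᵐ`. -/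
noncomputable def dotv {m k : ℕ} (v : Fin m → ℝ)
    (x : Fin m → EuclideanSpace ℝ (Fin k)) : EuclideanSpace ℝ (Fin k) :=
  ∑ i, v i • x i

/-- The Brascamp–Lieb form `Λ(f₁,…,f_N) = ∫ ∏ f_j(v_j · x) dx`. -/
noncomputable def BLform {m k N : ℕ} (v : Fin N → Fin m → ℝ)
    (f : Fin N → EuclideanSpace ℝ (Fin k) → ℝ≥0∞) : ℝ≥0∞ :=
  ∫⁻ x : Fin m → EuclideanSpace ℝ (Fin k), ∏ j, f j (dotv (v j) x)

/-- The weighted norm `‖f‖_{L^p_α} = ‖ |·|^α f ‖_{L^p}`. -/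
noncomputable def wnorm {k : ℕ} (p α : ℝ)
    (f : EuclideanSpace ℝ (Fin k) → ℝ≥0∞) : ℝ≥0∞ :=
  (∫⁻ y : EuclideanSpace ℝ (Fin k), ((‖y‖₊ : ℝ≥0∞) ^ α * f y) ^ p) ^ (1 / p)

/-- A family of vectors in `ℝᵐ` is generic if every subfamily of cardinality `m`
is a basis of `ℝᵐ`. -/
def IsGeneric {m N : ℕ} (v : Fin N → Fin m → ℝ) : Prop :=
  ∀ s : Finset (Fin N), s.card = m →
    LinearIndependent ℝ (fun i : s => v i.1) ∧
      Submodule.span ℝ (v '' ↑s) = ⊤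

/-
Test the estimate on indicators of small balls. Choose `x₀ ∈ (ℝᵏ)ᵐ` with `v_j · x₀ ≠ 0` for all
`j`, and `y` with `v_j · y ≠ 0` exactly when `v_j ∉ V` (a linear functional vanishing on `V` but
on none of the `v_j ∉ V`, tensored with a fixed vector of `ℝᵏ`). Let `f_j` be the indicator of a
ball of fixed radius around `v_j · (R y + x₀)`. A fixed ball around `R y + x₀` is mapped into all
these balls, so `Λ(f) ≳ 1` uniformly in `R`. All balls stay away from the origin: those with
`v_j ∈ V` do not move, while for `v_j ∉ V` the centre has size `≈ R`, so that
`‖f_j‖_{L^p_λ} ≲ R^{λ_j}`. Hence `1 ≲ R^{Σ_{v_j ∉ V} λ_j}` as `R → ∞`, and the exponent is `≥ 0`.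
-/

open Metric Filter Topology

theorem Module.exists_dual_forall_apply_ne_zero_of_notMem {K M ι : Type*} [Field K]
    [Infinite K] [AddCommGroup M] [Module K M] [Finite ι] (V : Submodule K M) (u : ι → M)
    (hu : ∀ i, u i ∉ V) : ∃ φ : Module.Dual K M, (∀ x ∈ V, φ x = 0) ∧ ∀ i, φ (u i) ≠ 0 := by
  obtain ⟨ψ, hψ⟩ := exists_dual_forall_apply_ne_zero (K := K) (fun i => V.mkQ (u i))
    fun i => (Submodule.Quotient.mk_eq_zero V).not.2 (hu i)
  exact ⟨ψ.comp V.mkQ, fun x hx => by simp [(Submodule.Quotient.mk_eq_zero V).2 hx], hψ⟩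

section dotv

variable {m k : ℕ}

lemma dotv_add (v : Fin m → ℝ) (x y : Fin m → EuclideanSpace ℝ (Fin k)) :
    dotv v (x + y) = dotv v x + dotv v y := by
  simp [dotv, smul_add, Finset.sum_add_distrib]

lemma dotv_smul (v : Fin m → ℝ) (c : ℝ) (x : Fin m → EuclideanSpace ℝ (Fin k)) :
    dotv v (c • x) = c • dotv v x := by
  simp [dotv, Finset.smul_sum, smul_comm c]

lemma dotv_dual_smul (φ : Module.Dual ℝ (Fin m → ℝ)) (v : Fin m → ℝ)
    (t : EuclideanSpace ℝ (Fin k)) :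
    dotv v (fun i => φ (Pi.single i 1) • t) = φ v • t := by
  conv_rhs => rw [pi_eq_sum_univ' v, map_sum, Finset.sum_smul]
  simp [dotv, smul_smul]

lemma dist_dotv_le (v : Fin m → ℝ) (x y : Fin m → EuclideanSpace ℝ (Fin k)) :
    dist (dotv v x) (dotv v y) ≤ (∑ i, |v i|) * dist x y := by
  rw [dist_eq_norm, dist_eq_norm, Finset.sum_mul, dotv, dotv, ← Finset.sum_sub_distrib]
  refine (norm_sum_le _ _).trans (Finset.sum_le_sum fun i _ => ?_)
  rw [← smul_sub, norm_smul, Real.norm_eq_abs]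
  exact mul_le_mul_of_nonneg_left (norm_le_pi_norm (x - y) i) (abs_nonneg _)

lemma exists_dotv_ne_zero_iff_notMem {N : ℕ} (hk : 0 < k) (v : Fin N → Fin m → ℝ)
    (V : Submodule ℝ (Fin m → ℝ)) :
    ∃ y : Fin m → EuclideanSpace ℝ (Fin k), ∀ j, dotv (v j) y ≠ 0 ↔ v j ∉ V := by
  obtain ⟨φ, hφV, hφ⟩ := Module.exists_dual_forall_apply_ne_zero_of_notMem V
    (fun j : {j // v j ∉ V} => v j) fun j => j.2
  have ht : EuclideanSpace.single (⟨0, hk⟩ : Fin k) (1 : ℝ) ≠ 0 := by simp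
  refine ⟨fun i => φ (Pi.single i 1) • EuclideanSpace.single ⟨0, hk⟩ 1, fun j => ?_⟩
  rw [dotv_dual_smul, Ne, smul_eq_zero, not_or, and_iff_left ht]
  exact ⟨fun h hV => h (hφV _ hV), fun h => hφ ⟨j, h⟩⟩

end dotv

lemma exists_pos_forall_two_mul_mul_le {ι : Type*} [Finite ι] (s d : ι → ℝ)
    (hd : ∀ i, 0 < d i) : ∃ δ > 0, ∀ i, 2 * (s i * δ) ≤ d i := by
  have h : ∀ᶠ δ in 𝓝[>] (0 : ℝ), ∀ i, 2 * (s i * δ) ≤ d i :=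
    eventually_all.2 fun i => nhdsWithin_le_nhds <|
      (Continuous.tendsto (by fun_prop) 0).eventually (eventually_le_nhds (by simpa using hd i))
  obtain ⟨δ, hδ, hδpos⟩ := (h.and self_mem_nhdsWithin).exists
  exact ⟨δ, hδpos, hδ⟩

lemma coe_nnnorm_rpow_le_of_mem_closedBall {E : Type*} [SeminormedAddCommGroup E] {b y : E}
    (α : ℝ) (hb : 0 < ‖b‖) (hy : y ∈ closedBall b (‖b‖ / 2)) :
    (‖y‖₊ : ℝ≥0∞) ^ α ≤ ENNReal.ofReal (2 ^ |α| * ‖b‖ ^ α) := by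
  rw [mem_closedBall_iff_norm] at hy
  have hlo : ‖b‖ / 2 ≤ ‖y‖ := by linarith [norm_sub_norm_le b y, norm_sub_rev y b]
  have hhi : ‖y‖ ≤ 2 * ‖b‖ := by linarith [norm_le_norm_add_norm_sub' y b]
  rw [← enorm_eq_nnnorm, ← ofReal_norm, ENNReal.ofReal_rpow_of_pos (by linarith)]
  refine ENNReal.ofReal_le_ofReal ?_
  rcases le_or_gt 0 α with hα | hα
  · calc ‖y‖ ^ α ≤ (2 * ‖b‖) ^ α := Real.rpow_le_rpow (norm_nonneg y) hhi hα
      _ = 2 ^ |α| * ‖b‖ ^ α := by rw [abs_of_nonneg hα, Real.mul_rpow zero_le_two hb.le]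
  · calc ‖y‖ ^ α ≤ (‖b‖ / 2) ^ α := Real.rpow_le_rpow_of_nonpos (half_pos hb) hlo hα.le
      _ = 2 ^ |α| * ‖b‖ ^ α := by
        rw [abs_of_neg hα, Real.div_rpow hb.le zero_le_two, Real.rpow_neg zero_le_two,
          div_eq_inv_mul]

section wnorm

variable {k : ℕ} {p : ℝ}

lemma wnorm_zero_left (α : ℝ) (f : EuclideanSpace ℝ (Fin k) → ℝ≥0∞) : wnorm 0 α f = 1 := by
  simp [wnorm]

lemma wnorm_indicator_closedBall_le (α : ℝ) (hp : 0 < p) {a b : EuclideanSpace ℝ (Fin k)}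
    {r : ℝ} (hb : b ≠ 0) (hab : ‖a - b‖ + r ≤ ‖b‖ / 2) :
    wnorm p α ((closedBall a r).indicator fun _ => 1) ≤ ENNReal.ofReal (2 ^ |α| * ‖b‖ ^ α) *
      volume (closedBall (0 : EuclideanSpace ℝ (Fin k)) r) ^ (1 / p) := by
  set B := ENNReal.ofReal (2 ^ |α| * ‖b‖ ^ α)
  have hsub : closedBall a r ⊆ closedBall b (‖b‖ / 2) :=
    closedBall_subset_closedBall' (by rwa [dist_eq_norm, add_comm])
  have hpointwise : ∀ y, ((‖y‖₊ : ℝ≥0∞) ^ α * (closedBall a r).indicator (fun _ => 1) y) ^ p ≤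
      (closedBall a r).indicator (fun _ => B ^ p) y := by
    intro y
    by_cases hy : y ∈ closedBall a r
    · rw [Set.indicator_of_mem hy, Set.indicator_of_mem hy, mul_one]
      exact ENNReal.rpow_le_rpow
        (coe_nnnorm_rpow_le_of_mem_closedBall α (norm_pos_iff.2 hb) (hsub hy)) hp.le
    · rw [Set.indicator_of_notMem hy, Set.indicator_of_notMem hy, mul_zero,
        ENNReal.zero_rpow_of_pos hp]
  calc wnorm p α ((closedBall a r).indicator fun _ => 1)
      ≤ (∫⁻ y, (closedBall a r).indicator (fun _ => B ^ p) y) ^ (1 / p) :=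
        ENNReal.rpow_le_rpow (lintegral_mono hpointwise) (by positivity)
    _ = B * volume (closedBall a r) ^ (1 / p) := by
        rw [lintegral_indicator_const measurableSet_closedBall,
          ENNReal.mul_rpow_of_nonneg _ _ (by positivity), ← ENNReal.rpow_mul,
          mul_one_div_cancel hp.ne', ENNReal.rpow_one]
    _ = B * volume (closedBall (0 : EuclideanSpace ℝ (Fin k)) r) ^ (1 / p) := by
        rw [Measure.addHaar_closedBall_center]

lemma wnorm_indicator_closedBall_ne_top (α : ℝ) (hp : 0 < p) {b : EuclideanSpace ℝ (Fin k)}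
    {r : ℝ} (hb : b ≠ 0) (hr : 2 * r ≤ ‖b‖) :
    wnorm p α ((closedBall b r).indicator fun _ => 1) ≠ ⊤ :=
  ne_top_of_le_ne_top
    (ENNReal.mul_ne_top ENNReal.ofReal_ne_top
      (ENNReal.rpow_ne_top_of_nonneg (by positivity) measure_closedBall_lt_top.ne))
    (wnorm_indicator_closedBall_le α hp hb (by rw [sub_self, norm_zero]; linarith))

lemma exists_eventually_wnorm_indicator_closedBall_smul_add_le (α : ℝ) (hp : 0 < p)
    {u : EuclideanSpace ℝ (Fin k)} (hu : u ≠ 0) (b : EuclideanSpace ℝ (Fin k)) (r : ℝ) :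
    ∃ K ≠ ⊤, ∀ᶠ R in atTop,
      wnorm p α ((closedBall (R • u + b) r).indicator fun _ => 1) ≤ ENNReal.ofReal (R ^ α) * K := by
  refine ⟨ENNReal.ofReal (2 ^ |α| * ‖u‖ ^ α) *
      volume (closedBall (0 : EuclideanSpace ℝ (Fin k)) r) ^ (1 / p),
    ENNReal.mul_ne_top ENNReal.ofReal_ne_top
      (ENNReal.rpow_ne_top_of_nonneg (by positivity) measure_closedBall_lt_top.ne), ?_⟩
  filter_upwards [eventually_gt_atTop 0, (tendsto_id.atTop_mul_const
    (norm_pos_iff.2 hu)).eventually_ge_atTop (2 * (‖b‖ + r))] with R hR (hRu : _ ≤ R * ‖u‖)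
  have hRu' : ‖R • u‖ = R * ‖u‖ := by rw [norm_smul, Real.norm_of_nonneg hR.le]
  refine (wnorm_indicator_closedBall_le α hp (smul_ne_zero hR.ne' hu)
    (by rw [add_sub_cancel_left, hRu']; linarith)).trans_eq ?_
  rw [hRu', Real.mul_rpow hR.le (norm_nonneg u), mul_left_comm,
    ENNReal.ofReal_mul (by positivity), mul_assoc]

end wnorm

section BLform

variable {m k N : ℕ} {ρ : Fin N → ℝ}

lemma prod_mul_volume_le_BLform (v : Fin N → Fin m → ℝ) (x₀ : Fin m → EuclideanSpace ℝ (Fin k))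
    (δ : ℝ) (hρ : ∀ j, (∑ i, |v j i|) * δ ≤ ρ j) (c : Fin N → ℝ≥0∞) :
    (∏ j, c j) * volume (closedBall x₀ δ) ≤
      BLform v fun j => (closedBall (dotv (v j) x₀) (ρ j)).indicator fun _ => c j := by
  have hmem : ∀ x ∈ closedBall x₀ δ, ∀ j, dotv (v j) x ∈ closedBall (dotv (v j) x₀) (ρ j) :=
    fun x hx j => (dist_dotv_le _ _ _).trans <|
      (mul_le_mul_of_nonneg_left (mem_closedBall.1 hx) (by positivity)).trans (hρ j)
  calc (∏ j, c j) * volume (closedBall x₀ δ) = ∫⁻ _ in closedBall x₀ δ, ∏ j, c j :=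
        (setLIntegral_const _ _).symm
    _ ≤ ∫⁻ x in closedBall x₀ δ, ∏ j, (closedBall (dotv (v j) x₀) (ρ j)).indicator
          (fun _ => c j) (dotv (v j) x) :=
        setLIntegral_mono' measurableSet_closedBall fun x hx => le_of_eq <|
          Finset.prod_congr rfl fun j _ => (Set.indicator_of_mem (hmem x hx j) fun _ => c j).symm
    _ ≤ _ := setLIntegral_le_lintegral _ _

lemma exists_eventually_prod_wnorm_le {v : Fin N → Fin m → ℝ} {p lam : Fin N → ℝ}
    {x₀ : Fin m → EuclideanSpace ℝ (Fin k)} (hp : ∀ j, 0 < p j) (hx₀ : ∀ j, dotv (v j) x₀ ≠ 0)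
    (hρ : ∀ j, 2 * ρ j ≤ ‖dotv (v j) x₀‖) (y : Fin m → EuclideanSpace ℝ (Fin k)) :
    ∃ B ≠ ⊤, ∀ᶠ R in atTop,
      ∏ j, wnorm (p j) (lam j) ((closedBall (dotv (v j) (R • y + x₀)) (ρ j)).indicator fun _ => 1)
        ≤ ENNReal.ofReal (R ^ ∑ j ∈ Finset.univ.filter (fun j => dotv (v j) y ≠ 0), lam j) * B := by
  have hfactor : ∀ j, ∃ K ≠ ⊤, ∀ᶠ R in atTop,
      wnorm (p j) (lam j) ((closedBall (dotv (v j) (R • y + x₀)) (ρ j)).indicator fun _ => 1) ≤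
        ENNReal.ofReal (R ^ if dotv (v j) y ≠ 0 then lam j else 0) * K := by
    intro j
    simp only [dotv_add, dotv_smul]
    by_cases hj : dotv (v j) y = 0
    · refine ⟨_, wnorm_indicator_closedBall_ne_top (lam j) (hp j) (hx₀ j) (hρ j),
        Eventually.of_forall fun R => ?_⟩
      simp [hj]
    · simpa [hj] using exists_eventually_wnorm_indicator_closedBall_smul_add_le (lam j) (hp j) hj
        (dotv (v j) x₀) (ρ j)
  choose K hK hKR using hfactor
  refine ⟨∏ j, K j, ENNReal.prod_ne_top fun j _ => hK j, ?_⟩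
  filter_upwards [eventually_all.2 hKR, eventually_gt_atTop 0] with R hR hRpos
  calc _ ≤ ∏ j, ENNReal.ofReal (R ^ if dotv (v j) y ≠ 0 then lam j else 0) * K j :=
        Finset.prod_le_prod' fun j _ => hR j
    _ = _ := by
      rw [Finset.prod_mul_distrib, ← ENNReal.ofReal_prod_of_nonneg fun j _ => by positivity,
        ← Real.rpow_sum_of_pos hRpos, Finset.sum_filter]

end BLform

def HasWeightedBLBound (k : ℕ) {m N : ℕ} (v : Fin N → Fin m → ℝ) (p lam : Fin N → ℝ)
    (C : ℝ≥0∞) : Prop :=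
  ∀ f : Fin N → EuclideanSpace ℝ (Fin k) → ℝ≥0∞, (∀ j, Measurable (f j)) →
    BLform v f ≤ C * ∏ j, wnorm (p j) (lam j) (f j)

namespace HasWeightedBLBound

variable {m k N : ℕ} {v : Fin N → Fin m → ℝ} {p lam : Fin N → ℝ} {C : ℝ≥0∞}
  {x₀ : Fin m → EuclideanSpace ℝ (Fin k)}

/-- Since `1 / 0 = 0`, the condition `1 / p ∈ [0, 1]` admits `p = 0`, for which `wnorm` is
identically `1`; a bump of height `⊤` in that slot then makes `Λ` infinite. -/
theorem exponent_ne_zero (hbound : HasWeightedBLBound k v p lam C) (hC : C ≠ ⊤)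
    (hp : ∀ j, 0 ≤ p j) (hx₀ : ∀ j, dotv (v j) x₀ ≠ 0) (j₀ : Fin N) : p j₀ ≠ 0 := by
  intro hj₀
  obtain ⟨δ, hδ, hρ⟩ := exists_pos_forall_two_mul_mul_le (fun j => ∑ i, |v j i|)
    (fun j => ‖dotv (v j) x₀‖) fun j => norm_pos_iff.2 (hx₀ j)
  set c := Function.update (1 : Fin N → ℝ≥0∞) j₀ ⊤
  set f : Fin N → EuclideanSpace ℝ (Fin k) → ℝ≥0∞ := fun j =>
    (closedBall (dotv (v j) x₀) ((∑ i, |v j i|) * δ)).indicator fun _ => c j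
  have hBL : BLform v f = ⊤ := by
    have h := prod_mul_volume_le_BLform v x₀ δ (fun j => le_rfl) c
    simp only [c, Finset.prod_update_of_mem (Finset.mem_univ j₀), Pi.one_apply,
      Finset.prod_const_one, mul_one] at h
    rwa [ENNReal.top_mul (measure_closedBall_pos volume x₀ hδ).ne', top_le_iff] at h
  have hnorm : ∀ j, wnorm (p j) (lam j) (f j) ≠ ⊤ := by
    intro j
    rcases (hp j).eq_or_lt with h | h
    · rw [← h, wnorm_zero_left]
      exact ENNReal.one_ne_top
    · have hj : j ≠ j₀ := by rintro rfl; exact h.ne' hj₀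
      simp only [f, c, Function.update_of_ne hj, Pi.one_apply]
      exact wnorm_indicator_closedBall_ne_top _ h (hx₀ j) (hρ j)
  refine ENNReal.mul_ne_top hC (ENNReal.prod_ne_top (s := Finset.univ) fun j _ => hnorm j)
    (top_le_iff.1 ?_)
  exact hBL ▸ hbound f fun j => measurable_const.indicator measurableSet_closedBall

theorem sum_nonneg (hbound : HasWeightedBLBound k v p lam C) (hC : C ≠ ⊤)
    (hp : ∀ j, 0 < p j) (hx₀ : ∀ j, dotv (v j) x₀ ≠ 0) (y : Fin m → EuclideanSpace ℝ (Fin k)) :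
    0 ≤ ∑ j ∈ Finset.univ.filter (fun j => dotv (v j) y ≠ 0), lam j := by
  set e := ∑ j ∈ Finset.univ.filter (fun j => dotv (v j) y ≠ 0), lam j
  by_contra! hneg
  obtain ⟨δ, hδ, hρ⟩ := exists_pos_forall_two_mul_mul_le (fun j => ∑ i, |v j i|)
    (fun j => ‖dotv (v j) x₀‖) fun j => norm_pos_iff.2 (hx₀ j)
  obtain ⟨B, hB, hupper⟩ := exists_eventually_prod_wnorm_le (lam := lam) hp hx₀ hρ y
  have hvol_le : ∀ᶠ R in atTop, volume (closedBall (0 : Fin m → EuclideanSpace ℝ (Fin k)) δ) ≤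
      C * (ENNReal.ofReal (R ^ e) * B) := by
    filter_upwards [hupper] with R hR
    have h := prod_mul_volume_le_BLform v (R • y + x₀) δ (fun j => le_rfl) fun _ => 1
    rw [Finset.prod_const_one, one_mul, Measure.addHaar_closedBall_center] at h
    exact (h.trans (hbound _ fun j => measurable_const.indicator measurableSet_closedBall)).trans
      (mul_le_mul_right hR C)
  have hlim : Tendsto (fun R : ℝ => C * (ENNReal.ofReal (R ^ e) * B)) atTop (𝓝 0) := by
    have h := ENNReal.tendsto_ofReal (by simpa using tendsto_rpow_neg_atTop (neg_pos.2 hneg))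
    simpa using ENNReal.Tendsto.const_mul (ENNReal.Tendsto.mul_const h (Or.inr hB)) (Or.inr hC)
  exact (measure_closedBall_pos volume _ hδ).ne' (le_zero_iff.1 (ge_of_tendsto hlim hvol_le))

end HasWeightedBLBound

theorem necessary_condition_general (m k N : ℕ) (hk : 0 < k)
    (v : Fin N → Fin m → ℝ) (hv0 : ∀ j, v j ≠ 0)
    (p lam : Fin N → ℝ)
    (hp : ∀ j, 0 ≤ 1 / p j ∧ 1 / p j ≤ 1)
    (C : ℝ≥0∞) (hC : C ≠ ⊤)
    (hbound : ∀ f : Fin N → EuclideanSpace ℝ (Fin k) → ℝ≥0∞, (∀ j, Measurable (f j)) →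
      BLform v f ≤ C * ∏ j, wnorm (p j) (lam j) (f j)) :
    ∀ V : Submodule ℝ (Fin m → ℝ),
      0 ≤ ∑ j ∈ Finset.univ.filter (fun j => v j ∉ V), lam j := by
  intro V
  have hbound : HasWeightedBLBound k v p lam C := hbound
  have hp_nonneg : ∀ j, 0 ≤ p j := fun j => one_div_nonneg.1 (hp j).1
  obtain ⟨x₀, hx₀⟩ := exists_dotv_ne_zero_iff_notMem hk v ⊥
  replace hx₀ : ∀ j, dotv (v j) x₀ ≠ 0 := fun j => (hx₀ j).2 (by simpa using hv0 j)
  have hp_pos : ∀ j, 0 < p j := fun j =>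
    (hp_nonneg j).lt_of_ne' (hbound.exponent_ne_zero hC hp_nonneg hx₀ j)
  obtain ⟨y, hy⟩ := exists_dotv_ne_zero_iff_notMem hk v V
  simpa only [hy] using hbound.sum_nonneg hC hp_pos hx₀ y

/-- A necessary condition for the weighted Brascamp–Lieb estimate. -/
theorem necessary_condition (m k N : ℕ) (hm : 0 < m) (hk : 0 < k) (hN : 0 < N)
    (v : Fin N → Fin m → ℝ) (hv0 : ∀ j, v j ≠ 0) (hvinj : Function.Injective v)
    (hnc : ∀ i j, i ≠ j → ∀ c : ℝ, v i ≠ c • v j)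
    (p lam : Fin N → ℝ)
    (hp : ∀ j, 0 ≤ 1 / p j ∧ 1 / p j ≤ 1)
    (C : ℝ≥0∞) (hC : C ≠ ⊤)
    (hbound : ∀ f : Fin N → EuclideanSpace ℝ (Fin k) → ℝ≥0∞, (∀ j, Measurable (f j)) →
      BLform v f ≤ C * ∏ j, wnorm (p j) (lam j) (f j)) :
    ∀ V : Submodule ℝ (Fin m → ℝ),
      0 ≤ ∑ j ∈ Finset.univ.filter (fun j => v j ∉ V), lam j :=
  necessary_condition_general m k N hk v hv0 p lam hp C hC hbound
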